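/- For every state ρ on ℂ^{d₁}⊗⋯⊗ℂ^{d_N}, all positive integers S₁,…,S_N ≥ 1, and every choice of POVMs M_n^{(s_n)} on ℂ^{d_n} with finite outcome sets Λ_n (s_n = 1,…,S_n, n = 1,…,N), the quantum S₁×⋯×S_N-setting correlation scenario on ρ admits an LqHV (local quasi hidden variable) model. -/

import Mathlib

open scoped ComplexOrder Matrix
open MeasureTheory ProbabilityTheory

namespace LqHV

/-- Entrywise tensor (Kronecker) product of a finite family of square complex matrices,
realized on the pi-type index. -/
def tprod {ι : Type} [Fintype ι] [DecidableEq ι] {κ : ι → Type} [∀ i, Fintype (κ i)]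
    (X : ∀ i, Matrix (κ i) (κ i) ℂ) : Matrix (∀ i, κ i) (∀ i, κ i) ℂ :=
  fun a b => ∏ i, X i (a i) (b i)

/-- Elementary (product) vector of a family of vectors. -/
def tvec {ι : Type} [Fintype ι] [DecidableEq ι] {κ : ι → Type} (ψ : ∀ i, κ i → ℂ) : (∀ i, κ i) → ℂ :=
  fun a => ∏ i, ψ i (a i)

/-- Tensor positivity of a matrix on a tensor product space. -/
def TensorPos {ι : Type} [Fintype ι] [DecidableEq ι] {κ : ι → Type} [∀ i, Fintype (κ i)]
    (Z : Matrix (∀ i, κ i) (∀ i, κ i) ℂ) : Prop :=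
  ∀ ψ : ∀ i, κ i → ℂ, 0 ≤ star (tvec ψ) ⬝ᵥ Z.mulVec (tvec ψ)

/-- `C` is a covering of `Z`. -/
def IsCovering {ι : Type} [Fintype ι] [DecidableEq ι] {κ : ι → Type} [∀ i, Fintype (κ i)]
    (Z C : Matrix (∀ i, κ i) (∀ i, κ i) ℂ) : Prop :=
  TensorPos C ∧ TensorPos (C + Z) ∧ TensorPos (C - Z)

/-- The covering norm. -/
noncomputable def covNorm {ι : Type} [Fintype ι] [DecidableEq ι] {κ : ι → Type} [∀ i, Fintype (κ i)]
    (Z : Matrix (∀ i, κ i) (∀ i, κ i) ℂ) : ℝ :=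
  sInf ((fun C => (Matrix.trace C).re) '' {C | IsCovering Z C})

/-- The absolute value `√(Wᴴ W)` of a matrix. -/
noncomputable def matAbs {n : Type} [Fintype n] [DecidableEq n]
    (W : Matrix n n ℂ) : Matrix n n ℂ :=
  (Matrix.posSemidef_conjTranspose_mul_self W).1.eigenvectorUnitary.1 *
    Matrix.diagonal ((↑) ∘ (√·) ∘ (Matrix.posSemidef_conjTranspose_mul_self W).1.eigenvalues) *
    (star (Matrix.posSemidef_conjTranspose_mul_self W).1.eigenvectorUnitary : Matrix n n ℂ)

/-- The trace norm `tr √(Wᴴ W)`. -/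
noncomputable def traceNorm {n : Type} [Fintype n] [DecidableEq n]
    (W : Matrix n n ℂ) : ℝ :=
  ((matAbs W).trace).re

variable {N : ℕ}

/-- In the tensor product space `⊗_n (ℂ^{d n})^{⊗ S n}`, the operator that acts as `X n` in
slot `k n` of site `n` and as the identity elsewhere. -/
def slot {d S : Fin N → ℕ} (X : ∀ n, Matrix (Fin (d n)) (Fin (d n)) ℂ) (k : ∀ n, Fin (S n)) :
    ∀ p : Σ n : Fin N, Fin (S n), Matrix (Fin (d p.1)) (Fin (d p.1)) ℂ :=
  fun p => if p.2 = k p.1 then X p.1 else 1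

/-- `T` is an `S₁ × ⋯ × S_N`-setting source operator for the state `ρ`. -/
def IsSourceOp (d S : Fin N → ℕ) (ρ : Matrix (∀ n, Fin (d n)) (∀ n, Fin (d n)) ℂ)
    (T : Matrix (∀ p : Σ n : Fin N, Fin (S n), Fin (d p.1))
          (∀ p : Σ n : Fin N, Fin (S n), Fin (d p.1)) ℂ) : Prop :=
  T.IsHermitian ∧
    ∀ (X : ∀ n, Matrix (Fin (d n)) (Fin (d n)) ℂ) (k : ∀ n, Fin (S n)),
      (T * tprod (slot X k)).trace = (ρ * tprod X).trace

/-- A POVM with finite outcome set. -/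
def IsPOVM {d : ℕ} {Λ : Type} [Fintype Λ] (M : Λ → Matrix (Fin d) (Fin d) ℂ) : Prop :=
  (∀ l, (M l).PosSemidef) ∧ ∑ l, M l = 1

/-- Joint probability distributions of a quantum correlation scenario. -/
noncomputable def quantumP {d S : Fin N → ℕ} {Λ : Fin N → Type} [∀ n, Fintype (Λ n)]
    (ρ : Matrix (∀ n, Fin (d n)) (∀ n, Fin (d n)) ℂ)
    (M : ∀ n, Fin (S n) → Λ n → Matrix (Fin (d n)) (Fin (d n)) ℂ)
    (s : ∀ n, Fin (S n)) (lam : ∀ n, Λ n) : ℝ :=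
  ((ρ * tprod (fun n => M n (s n) (lam n))).trace).re

/-- A real-valued (signed) measure on the finite set `∏_n Λ_n^{S n}` is normalized. -/
def Normalized {S : Fin N → ℕ} {Λ : Fin N → Type} [∀ n, Fintype (Λ n)] [∀ n, DecidableEq (Λ n)]
    (μ : (∀ n, Fin (S n) → Λ n) → ℝ) : Prop :=
  ∑ ω, μ ω = 1

/-- `μ` returns all joint distributions `P` of the scenario as the corresponding marginals. -/
def ReturnsMarginals {S : Fin N → ℕ} {Λ : Fin N → Type} [∀ n, Fintype (Λ n)]
    [∀ n, DecidableEq (Λ n)]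
    (μ : (∀ n, Fin (S n) → Λ n) → ℝ) (P : (∀ n, Fin (S n)) → (∀ n, Λ n) → ℝ) : Prop :=
  ∀ (s : ∀ n, Fin (S n)) (lam : ∀ n, Λ n),
    (∑ ω : ∀ n, Fin (S n) → Λ n, if (fun n => ω n (s n)) = lam then μ ω else 0) = P s lam

/-- The total variation norm of a real-valued measure on a finite set. -/
noncomputable def varNorm {S : Fin N → ℕ} {Λ : Fin N → Type} [∀ n, Fintype (Λ n)]
    [∀ n, DecidableEq (Λ n)] (μ : (∀ n, Fin (S n) → Λ n) → ℝ) : ℝ :=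
  ∑ ω, |μ ω|

/-- The parameter `γ_E`: the infimum of the total variation norms over all normalized
real-valued measures returning all joint distributions of the scenario as marginals. -/
noncomputable def gammaE {S : Fin N → ℕ} {Λ : Fin N → Type} [∀ n, Fintype (Λ n)]
    [∀ n, DecidableEq (Λ n)] (P : (∀ n, Fin (S n)) → (∀ n, Λ n) → ℝ) : ℝ :=
  sInf {t | ∃ μ, Normalized μ ∧ ReturnsMarginals μ P ∧ t = varNorm μ}

/-- Integration of a bounded function with respect to a signed measure, via the Jordan
decomposition. -/
noncomputable def signedIntegral {Ω : Type} [MeasurableSpace Ω] (ν : SignedMeasure Ω)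
    (f : Ω → ℝ) : ℝ :=
  (∫ ω, f ω ∂ν.toJordanDecomposition.posPart) - ∫ ω, f ω ∂ν.toJordanDecomposition.negPart

/-- An `S₁ × ⋯ × S_N`-setting correlation scenario with finite outcome sets admits an LHV
(local hidden variable) model. -/
def AdmitsLHVFin {S : Fin N → ℕ} {Λ : Fin N → Type} [∀ n, Fintype (Λ n)]
    (P : (∀ n, Fin (S n)) → (∀ n, Λ n) → ℝ) : Prop :=
  ∃ (Ω : Type) (_ : MeasurableSpace Ω) (ν : Measure Ω) (_ : IsProbabilityMeasure ν)
    (p : ∀ n, Fin (S n) → Ω → Λ n → ℝ),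
    (∀ n s ω l, 0 ≤ p n s ω l) ∧ (∀ n s ω, ∑ l, p n s ω l = 1) ∧
    (∀ n s l, Measurable fun ω => p n s ω l) ∧
    ∀ (s : ∀ n, Fin (S n)) (lam : ∀ n, Λ n),
      P s lam = ∫ ω, ∏ n, p n (s n) ω (lam n) ∂ν

/-- An `S₁ × ⋯ × S_N`-setting correlation scenario with finite outcome sets admits an LqHV
(local quasi hidden variable) model. -/
def AdmitsLqHVFin {S : Fin N → ℕ} {Λ : Fin N → Type} [∀ n, Fintype (Λ n)]
    (P : (∀ n, Fin (S n)) → (∀ n, Λ n) → ℝ) : Prop :=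
  ∃ (Ω : Type) (_ : MeasurableSpace Ω) (ν : SignedMeasure Ω)
    (p : ∀ n, Fin (S n) → Ω → Λ n → ℝ),
    ν Set.univ = 1 ∧
    (∀ n s ω l, 0 ≤ p n s ω l) ∧ (∀ n s ω, ∑ l, p n s ω l = 1) ∧
    (∀ n s l, Measurable fun ω => p n s ω l) ∧
    ∀ (s : ∀ n, Fin (S n)) (lam : ∀ n, Λ n),
      P s lam = signedIntegral ν fun ω => ∏ n, p n (s n) ω (lam n)

end LqHV

/-!
Each party's `S` incompatible POVMs `M s` with outcomes in `Λ` are replaced by one quasi-joint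
measurement with outcomes `f : Fin S → Λ`,
`K f = |Λ|^(-S) • (1 + ∑ s, (|Λ| • M s (f s) - 1))`.
It is not positive, but it sums to `1` and its marginal on the `s`-th outcome is `M s`, since the
centred terms `|Λ| • M s - 1` sum to zero over the outcomes. Hence `ω ↦ Re tr (ρ (⊗ₙ Kₙ (ωₙ)))` is
a normalized real weight on the deterministic strategies `ω` that returns the quantum
distributions as marginals, and reading off `ωₙ (sₙ)` gives the LqHV model.
-/

open Finset MeasureTheory

namespace LqHV

section PiFinset

variable {ι A : Type*} [Fintype ι] [DecidableEq ι] [AddCommMonoid A]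

lemma sum_piFinset_comp_eval {κ : ι → Type*} [∀ i, DecidableEq (κ i)]
    (t : ∀ i, Finset (κ i)) (i : ι) (g : κ i → A) :
    ∑ f ∈ Fintype.piFinset t, g (f i) = (∏ j ∈ univ.erase i, #(t j)) • ∑ b ∈ t i, g b := by
  rw [← sum_fiberwise_of_maps_to (g := fun f => f i) (t := t i)
    (fun f hf => Fintype.mem_piFinset.mp hf i), smul_sum]
  refine sum_congr rfl fun b hb => ?_
  rw [sum_congr rfl fun f hf => congrArg g (mem_filter.mp hf).2, sum_const,
    Fintype.card_filter_piFinset_eq_of_mem t i hb]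

lemma sum_filter_eval_eq_zero {Λ : Type*} [Fintype Λ] [DecidableEq Λ] {g : Λ → A}
    (hg : ∑ b, g b = 0) {i₀ i : ι} (hi : i ≠ i₀) (l : Λ) :
    ∑ f : ι → Λ with f i₀ = l, g (f i) = 0 := by
  rw [← Fintype.piFinset_univ, ← Fintype.piFinset_update_singleton_eq_filter_piFinset_eq
    (fun _ => univ) i₀ (mem_univ l), sum_piFinset_comp_eval (κ := fun _ => Λ),
    Function.update_of_ne hi, hg, smul_zero]

end PiFinset

section QuasiJoint

variable {D Λ A : Type*} [Fintype D] [Fintype Λ] [Ring A] [Module ℚ A]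

def quasiJoint (M : D → Λ → A) (f : D → Λ) : A :=
  ((Fintype.card Λ : ℚ)⁻¹ ^ Fintype.card D) • (1 + ∑ s, (Fintype.card Λ • M s (f s) - 1))

variable [DecidableEq D] [DecidableEq Λ]

lemma sum_quasiJoint_filter_eval_eq (M : D → Λ → A) (hM : ∀ s, ∑ l, M s l = 1)
    (s₀ : D) (l : Λ) :
    ∑ f : D → Λ with f s₀ = l, quasiJoint M f = M s₀ l := by
  have : Nonempty D := ⟨s₀⟩
  have : Nonempty Λ := ⟨l⟩
  simp only [quasiJoint]
  set L := Fintype.card Λ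
  set F : Finset (D → Λ) := {f | f s₀ = l}
  have hF : #F = L ^ (Fintype.card D - 1) := by
    simpa using Fintype.card_filter_piFinset_const_eq_of_mem (univ : Finset Λ) s₀ (mem_univ l)
  have hcentred : ∀ s, ∑ b, (L • M s b - 1) = 0 := fun s => by
    rw [sum_sub_distrib, ← smul_sum, hM, sum_const, card_univ, sub_self]
  have hterm : ∀ s, ∑ f ∈ F, (L • M s (f s) - 1) =
      if s = s₀ then #F • (L • M s₀ l - 1) else 0 := by
    intro s
    split_ifs with hs
    · subst hs
      rw [sum_congr rfl fun f hf => by rw [(mem_filter.mp hf).2], sum_const]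
    · exact sum_filter_eval_eq_zero (hcentred s) hs l
  have hL : (L : ℚ) ≠ 0 := Nat.cast_ne_zero.mpr Fintype.card_ne_zero
  rw [← smul_sum, sum_add_distrib, sum_comm, sum_congr rfl fun s _ => hterm s, sum_ite_eq',
    if_pos (mem_univ _), sum_const, ← smul_add, add_sub_cancel, smul_smul, hF, ← pow_succ,
    Nat.sub_add_cancel Fintype.card_pos, ← Nat.cast_smul_eq_nsmul ℚ, smul_smul, Nat.cast_pow,
    ← mul_pow, inv_mul_cancel₀ hL, one_pow, one_smul]

lemma sum_quasiJoint (M : D → Λ → A) (hM : ∀ s, ∑ l, M s l = 1) :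
    ∑ f, quasiJoint M f = 1 := by
  rcases isEmpty_or_nonempty D with hD | ⟨⟨s₀⟩⟩
  · simp [quasiJoint]
  · rw [← hM s₀, ← sum_fiberwise univ (fun f : D → Λ => f s₀)]
    exact sum_congr rfl fun l _ => sum_quasiJoint_filter_eval_eq M hM s₀ l

end QuasiJoint

section TensorProduct

variable {ι : Type} [Fintype ι] [DecidableEq ι] {κ : ι → Type} [∀ i, Fintype (κ i)]

lemma sum_piFinset_tprod {β : ι → Type} (t : ∀ i, Finset (β i))
    (X : ∀ i, β i → Matrix (κ i) (κ i) ℂ) :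
    ∑ ω ∈ Fintype.piFinset t, tprod (fun i => X i (ω i)) = tprod fun i => ∑ b ∈ t i, X i b := by
  ext a b
  simp only [tprod, Matrix.sum_apply, prod_univ_sum]

lemma tprod_one [∀ i, DecidableEq (κ i)] : tprod (fun i => (1 : Matrix (κ i) (κ i) ℂ)) = 1 := by
  ext a b
  simp [tprod, Matrix.one_apply, prod_boole, funext_iff]

end TensorProduct

lemma signedIntegral_one {Ω : Type} [MeasurableSpace Ω] (ν : SignedMeasure Ω) :
    signedIntegral ν (fun _ => 1) = ν Set.univ := by
  conv_rhs => rw [← ν.toSignedMeasure_toJordanDecomposition]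
  rw [JordanDecomposition.toSignedMeasure, Measure.toSignedMeasure_sub_apply .univ]
  simp [signedIntegral, integral_const]

section FiniteSignedMeasure

variable {Ω : Type} [MeasurableSpace Ω] [DiscreteMeasurableSpace Ω] [Fintype Ω]

lemma integral_count_withDensity_ofReal (w f : Ω → ℝ) :
    ∫ x, f x ∂(Measure.count.withDensity fun x => ENNReal.ofReal (w x)) =
      ∑ x, max (w x) 0 * f x := by
  rw [integral_withDensity_eq_integral_toReal_smul .of_discrete
    (.of_forall fun _ => ENNReal.ofReal_lt_top), integral_count]
  simp only [ENNReal.toReal_ofReal', smul_eq_mul]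

noncomputable def jordanOfWeights (w : Ω → ℝ) : JordanDecomposition Ω where
  posPart := Measure.count.withDensity fun x => ENNReal.ofReal (w x)
  negPart := Measure.count.withDensity fun x => ENNReal.ofReal (-w x)
  posPart_finite := isFiniteMeasure_withDensity_ofReal .of_finite
  negPart_finite := isFiniteMeasure_withDensity_ofReal .of_finite
  mutuallySingular := withDensity_ofReal_mutuallySingular .of_discrete

lemma signedIntegral_toSignedMeasure_jordanOfWeights (w f : Ω → ℝ) :
    signedIntegral (jordanOfWeights w).toSignedMeasure f = ∑ x, w x * f x := by
  rw [signedIntegral, JordanDecomposition.toJordanDecomposition_toSignedMeasure]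
  simp only [jordanOfWeights, integral_count_withDensity_ofReal, ← sum_sub_distrib, ← sub_mul,
    max_zero_sub_max_neg_zero_eq_self]

end FiniteSignedMeasure

section Scenario

variable {N : ℕ} {d S : Fin N → ℕ} {Λ : Fin N → Type} [∀ n, Fintype (Λ n)]

noncomputable def quasiProb (ρ : Matrix (∀ n, Fin (d n)) (∀ n, Fin (d n)) ℂ)
    (M : ∀ n, Fin (S n) → Λ n → Matrix (Fin (d n)) (Fin (d n)) ℂ)
    (ω : ∀ n, Fin (S n) → Λ n) : ℝ :=
  (ρ * tprod fun n => quasiJoint (M n) (ω n)).trace.re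

variable {ρ : Matrix (∀ n, Fin (d n)) (∀ n, Fin (d n)) ℂ}
  {M : ∀ n, Fin (S n) → Λ n → Matrix (Fin (d n)) (Fin (d n)) ℂ}

lemma sum_piFinset_quasiProb (t : ∀ n, Finset (Fin (S n) → Λ n)) :
    ∑ ω ∈ Fintype.piFinset t, quasiProb ρ M ω =
      (ρ * tprod fun n => ∑ f ∈ t n, quasiJoint (M n) f).trace.re := by
  simp only [quasiProb, ← Complex.re_sum, ← Matrix.trace_sum, ← mul_sum, sum_piFinset_tprod]

variable [∀ n, DecidableEq (Λ n)]

lemma admitsLqHVFin_of_returnsMarginals {P : (∀ n, Fin (S n)) → (∀ n, Λ n) → ℝ}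
    (w : (∀ n, Fin (S n) → Λ n) → ℝ) (hw : Normalized w) (hP : ReturnsMarginals w P) :
    AdmitsLqHVFin P := by
  let _ : MeasurableSpace (∀ n, Fin (S n) → Λ n) := ⊤
  refine ⟨∀ n, Fin (S n) → Λ n, inferInstance, (jordanOfWeights w).toSignedMeasure,
    fun n s ω l => if ω n s = l then 1 else 0, ?_, ?_, ?_, fun _ _ _ => .of_discrete, ?_⟩
  · rw [← signedIntegral_one, signedIntegral_toSignedMeasure_jordanOfWeights]
    simpa [Normalized] using hw
  · intro n s ω l
    positivity
  · intro n s ω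
    simp
  · intro s lam
    rw [signedIntegral_toSignedMeasure_jordanOfWeights, ← hP s lam]
    refine sum_congr rfl fun ω _ => ?_
    simp [prod_boole, funext_iff, mul_ite]

lemma normalized_quasiProb (hM : ∀ n s, ∑ l, M n s l = 1) (hρ : ρ.trace = 1) :
    Normalized (quasiProb ρ M) := by
  rw [Normalized, ← Fintype.piFinset_univ, sum_piFinset_quasiProb]
  simp only [sum_quasiJoint _ (hM _), tprod_one, mul_one, hρ, Complex.one_re]

lemma returnsMarginals_quasiProb (hM : ∀ n s, ∑ l, M n s l = 1) :
    ReturnsMarginals (quasiProb ρ M) (quantumP ρ M) := by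
  intro s lam
  have hfilter : ({ω | (fun n => ω n (s n)) = lam} : Finset (∀ n, Fin (S n) → Λ n)) =
      Fintype.piFinset fun n => {f | f (s n) = lam n} := by
    ext ω
    simp [funext_iff]
  rw [← sum_filter, hfilter, sum_piFinset_quasiProb]
  simp only [sum_quasiJoint_filter_eval_eq _ (hM _), quantumP]

end Scenario

end LqHV

open LqHV in
theorem quantum_scenario_admits_LqHV_general {N : ℕ} (d S : Fin N → ℕ)
    {Λ : Fin N → Type} [∀ n, Fintype (Λ n)] [∀ n, DecidableEq (Λ n)]
    (ρ : Matrix (∀ n, Fin (d n)) (∀ n, Fin (d n)) ℂ)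
    (hρtr : ρ.trace = 1)
    (M : ∀ n, Fin (S n) → Λ n → Matrix (Fin (d n)) (Fin (d n)) ℂ)
    (hM : ∀ n s, IsPOVM (M n s)) :
    AdmitsLqHVFin (quantumP ρ M) :=
  have hM₁ : ∀ n s, ∑ l, M n s l = 1 := fun n s => (hM n s).2
  admitsLqHVFin_of_returnsMarginals _ (normalized_quasiProb hM₁ hρtr)
    (returnsMarginals_quasiProb hM₁)

open LqHV in
/-- **Theorem 2.** For every state `ρ` on `ℂ^{d₁} ⊗ ⋯ ⊗ ℂ^{d_N}`, all positive integers
`S₁, …, S_N ≥ 1` and every choice of POVMs `M n s` on `ℂ^{d n}` with finite outcome sets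
`Λ n`, the quantum `S₁ × ⋯ × S_N`-setting correlation scenario on `ρ` admits an LqHV model. -/
theorem quantum_scenario_admits_LqHV {N : ℕ} (d S : Fin N → ℕ) (hS : ∀ n, 1 ≤ S n)
    {Λ : Fin N → Type} [∀ n, Fintype (Λ n)] [∀ n, DecidableEq (Λ n)]
    (ρ : Matrix (∀ n, Fin (d n)) (∀ n, Fin (d n)) ℂ)
    (hρ : ρ.PosSemidef) (hρtr : ρ.trace = 1)
    (M : ∀ n, Fin (S n) → Λ n → Matrix (Fin (d n)) (Fin (d n)) ℂ)
    (hM : ∀ n s, IsPOVM (M n s)) :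
    AdmitsLqHVFin (quantumP ρ M) :=
  quantum_scenario_admits_LqHV_general d S ρ hρtr M hM
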